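/- Let A be a commutative ring with a derivation d : A → A, and on A[T,T⁻¹] let {f,g}_r := T^r·(∂_T f · D g − D f · ∂_T g) and let res f denote the coefficient of T⁻¹ in f. Then for all f,g,h ∈ A[T,T⁻¹] and all r ∈ ℤ, res(T^{−r}·({f,g}_r·h − {g,h}_r·f)) = −d(res(f·h·∂_T g)). In particular the pairing (f,g) ↦ res(T^{−r}·f·g) is ad-invariant up to total derivatives: res(T^{−r}·({f,g}_r·h)) and res(T^{−r}·(f·{g,h}_r)) differ by an element of the image of d. -/

import Mathlib

open LaurentPolynomial

variable {A : Type*} [CommRing A]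

/-- Formal derivative `∂_T` on Laurent polynomials: `∂_T (a·Tⁿ) = n·a·Tⁿ⁻¹`. -/
noncomputable def tder (f : A[T;T⁻¹]) : A[T;T⁻¹] :=
  Finsupp.sum (AddMonoidAlgebra.coeff f) fun n a => C (n • a) * T (n - 1)

/-- Coefficientwise extension `D` of a derivation `d : A → A`: `D (a·Tⁿ) = d(a)·Tⁿ`. -/
noncomputable def cder (d : A → A) (f : A[T;T⁻¹]) : A[T;T⁻¹] :=
  Finsupp.sum (AddMonoidAlgebra.coeff f) fun n a => C (d a) * T n

section basic
variable (d : A → A)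

lemma tder_single (n : ℤ) (a : A) : tder (C a * T n : A[T;T⁻¹]) = C (n • a) * T (n - 1) := by
  rw [tder, ← single_eq_C_mul_T, AddMonoidAlgebra.coeff_single, Finsupp.sum_single_index] <;> simp

lemma cder_single (n : ℤ) (a : A) (hd0 : d 0 = 0) :
    cder d (C a * T n : A[T;T⁻¹]) = C (d a) * T n := by
  rw [cder, ← single_eq_C_mul_T, AddMonoidAlgebra.coeff_single, Finsupp.sum_single_index]
  simp [hd0]

lemma tder_add (f g : A[T;T⁻¹]) : tder (f + g) = tder f + tder g := by
  rw [tder, tder, tder, AddMonoidAlgebra.coeff_add]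
  exact Finsupp.sum_add_index' (by simp) (by intro i a b; rw [smul_add, map_add, add_mul])

lemma cder_add (hd_add : ∀ a b : A, d (a + b) = d a + d b) (f g : A[T;T⁻¹]) :
    cder d (f + g) = cder d f + cder d g := by
  have hd0 : d 0 = 0 := by have := hd_add 0 0; simpa using this.symm
  rw [cder, cder, cder, AddMonoidAlgebra.coeff_add]
  exact Finsupp.sum_add_index' (by simp [hd0]) (by intro i a b; rw [hd_add, map_add, add_mul])
end basic

section leib
variable (d : A → A) (hd_add : ∀ a b : A, d (a + b) = d a + d b)
  (hd_mul : ∀ a b : A, d (a * b) = a * d b + d a * b)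

lemma tder_mul (f g : A[T;T⁻¹]) : tder (f * g) = tder f * g + f * tder g := by
  induction f using LaurentPolynomial.induction_on' with
  | add p q hp hq => rw [add_mul, tder_add, tder_add, hp, hq]; ring
  | C_mul_T n a =>
    induction g using LaurentPolynomial.induction_on' with
    | add p q hp hq => rw [mul_add, tder_add, tder_add, hp, hq]; ring
    | C_mul_T m b =>
      have key : (C a * T n : A[T;T⁻¹]) * (C b * T m) = C (a * b) * T (n + m) := by
        rw [T_add, map_mul]; ring
      rw [key, tder_single, tder_single, tder_single]
      simp only [← single_eq_C_mul_T, AddMonoidAlgebra.single_mul_single]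
      rw [show (n-1)+m = n+m-1 by ring, show n+(m-1) = n+m-1 by ring, ← AddMonoidAlgebra.single_add]
      congr 1
      rw [add_smul, smul_mul_assoc, mul_smul_comm]

include hd_add hd_mul in
lemma cder_mul (f g : A[T;T⁻¹]) : cder d (f * g) = cder d f * g + f * cder d g := by
  have hd0 : d 0 = 0 := by have := hd_add 0 0; simpa using this.symm
  induction f using LaurentPolynomial.induction_on' with
  | add p q hp hq => rw [add_mul, cder_add d hd_add, cder_add d hd_add, hp, hq]; ring
  | C_mul_T n a =>
    induction g using LaurentPolynomial.induction_on' with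
    | add p q hp hq => rw [mul_add, cder_add d hd_add, cder_add d hd_add, hp, hq]; ring
    | C_mul_T m b =>
      have key : (C a * T n : A[T;T⁻¹]) * (C b * T m) = C (a * b) * T (n + m) := by
        rw [T_add, map_mul]; ring
      rw [key, cder_single d _ _ hd0, cder_single d _ _ hd0, cder_single d _ _ hd0]
      simp only [← single_eq_C_mul_T, AddMonoidAlgebra.single_mul_single]
      rw [← AddMonoidAlgebra.single_add]
      congr 1
      rw [hd_mul]; ring

include hd_add in
lemma tder_cder (f : A[T;T⁻¹]) : tder (cder d f) = cder d (tder f) := by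
  have hd0 : d 0 = 0 := by have := hd_add 0 0; simpa using this.symm
  have hdz : ∀ (n : ℤ) (a : A), d (n • a) = n • d a := fun n a =>
    map_zsmul (AddMonoidHom.mk' d hd_add) n a
  induction f using LaurentPolynomial.induction_on' with
  | add p q hp hq =>
    rw [cder_add d hd_add, tder_add, tder_add, cder_add d hd_add, hp, hq]
  | C_mul_T n a =>
    rw [cder_single d _ _ hd0, tder_single, tder_single, cder_single d _ _ hd0, hdz]

end leib

/-- The bracket `{f,g}_r := T^r·(∂_T f · D g − D f · ∂_T g)`. -/
noncomputable def lbr (d : A → A) (r : ℤ) (f g : A[T;T⁻¹]) : A[T;T⁻¹] :=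
  T r * (tder f * cder d g - cder d f * tder g)

/-- The residue (coefficient of `T⁻¹`). -/
noncomputable def res (f : A[T;T⁻¹]) : A := AddMonoidAlgebra.coeff f (-1)

section resl
variable (d : A → A) (hd_add : ∀ a b : A, d (a + b) = d a + d b)

lemma res_add (f g : A[T;T⁻¹]) : res (f + g) = res f + res g := rfl

lemma res_single (n : ℤ) (a : A) : res (C a * T n : A[T;T⁻¹]) = if n = -1 then a else 0 := by
  rw [res, ← single_eq_C_mul_T, AddMonoidAlgebra.coeff_single]
  exact Finsupp.single_apply

lemma res_tder (f : A[T;T⁻¹]) : res (tder f) = 0 := by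
  induction f using LaurentPolynomial.induction_on' with
  | add p q hp hq => rw [tder_add, res_add, hp, hq, add_zero]
  | C_mul_T n a =>
    rw [tder_single, res_single]
    split_ifs with hn
    · rw [show n = 0 by omega]; simp
    · rfl

include hd_add in
lemma res_cder (f : A[T;T⁻¹]) : res (cder d f) = d (res f) := by
  have hd0 : d 0 = 0 := by have := hd_add 0 0; simpa using this.symm
  induction f using LaurentPolynomial.induction_on' with
  | add p q hp hq => rw [cder_add d hd_add, res_add, res_add, hd_add, hp, hq]
  | C_mul_T n a =>
    rw [cder_single d _ _ hd0, res_single, res_single]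
    split_ifs <;> simp [hd0]

end resl

lemma res_sub (f g : A[T;T⁻¹]) : res (f - g) = res f - res g := by
  simp only [res, AddMonoidAlgebra.coeff_sub]
  exact Finsupp.sub_apply _ _ _

/-- `res(T^{−r}·({f,g}_r·h − {g,h}_r·f)) = −d(res(f·h·∂_T g))`; in particular the pairing
`(f,g) ↦ res(T^{−r}·f·g)` is ad-invariant up to total derivatives: `res(T^{−r}·{f,g}_r·h)`
and `res(T^{−r}·f·{g,h}_r)` differ by an element of the image of `d`. -/
theorem res_ad_invariance (d : A → A)
    (hd_add : ∀ a b : A, d (a + b) = d a + d b)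
    (hd_mul : ∀ a b : A, d (a * b) = a * d b + d a * b)
    (r : ℤ) (f g h : A[T;T⁻¹]) :
    res (T (-r) * (lbr d r f g * h - lbr d r g h * f)) = - d (res (f * h * tder g)) ∧
    res (T (-r) * (lbr d r f g * h)) - res (T (-r) * (f * lbr d r g h)) ∈ Set.range d := by

  have hd0 : d 0 = 0 := by have := hd_add 0 0; simpa using this.symm
  have hdneg : ∀ a : A, d (-a) = - d a := by
    intro a
    have h0 := hd_add a (-a)
    simp only [add_neg_cancel, hd0] at h0
    linear_combination -h0
  -- the core identity
  have t1 : tder (f * (cder d g * h))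
      = tder f * (cder d g * h) + f * (cder d (tder g) * h + cder d g * tder h) := by
    rw [tder_mul, tder_mul, tder_cder d hd_add]
  have t2 : cder d (f * (tder g * h))
      = cder d f * (tder g * h) + f * (cder d (tder g) * h + tder g * cder d h) := by
    rw [cder_mul d hd_add hd_mul, cder_mul d hd_add hd_mul]
  have e : (tder f * cder d g - cder d f * tder g) * h
        - (tder g * cder d h - cder d g * tder h) * f
      = tder (f * (cder d g * h)) - cder d (f * (tder g * h)) := by
    rw [t1, t2]; ring
  have main : res ((tder f * cder d g - cder d f * tder g) * h
        - (tder g * cder d h - cder d g * tder h) * f) = - d (res (f * h * tder g)) := by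
    rw [e, res_sub, res_tder, res_cder d hd_add, show f * (tder g * h) = f * h * tder g by ring,
      zero_sub]
  have hT : ∀ x : A[T;T⁻¹], T (-r) * (T r * x) = x := fun x => by
    rw [← mul_assoc, ← T_add, neg_add_cancel, T_zero, one_mul]
  have e1 : T (-r) * (lbr d r f g * h - lbr d r g h * f)
      = (tder f * cder d g - cder d f * tder g) * h
        - (tder g * cder d h - cder d g * tder h) * f := by
    rw [show lbr d r f g * h - lbr d r g h * f
        = T r * ((tder f * cder d g - cder d f * tder g) * h
          - (tder g * cder d h - cder d g * tder h) * f) by rw [lbr, lbr]; ring, hT]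
  constructor
  · rw [e1, main]
  · refine ⟨-(res (f * h * tder g)), ?_⟩
    rw [hdneg, ← res_sub, show T (-r) * (lbr d r f g * h) - T (-r) * (f * lbr d r g h)
        = T (-r) * (lbr d r f g * h - lbr d r g h * f) by ring, e1, main]
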